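/- arXiv:1503.00460 — 6 statements merged into one kernel-verified Lean document; each statement's English description precedes it below -/
import Mathlib

section
/- The torsion of a bounded acyclic chain complex over a field with chosen bases is independent of the choice of bases of the boundary modules: if b_i and b'_i are two choices of bases of the boundary submodules B_i, then the alternating products of determinants agree, i.e. ∏_i det[b_{i-1}b_i/c_i]^{(-1)^i} = ∏_i det[b'_{i-1}b'_i/c_i]^{(-1)^i}. -/
/-!
Replacing `b` by `b'` multiplies the matrix `[b_{i-1} b_i / c_i]` on the right by a block upper
triangular matrix whose diagonal blocks are the changes of basis `[b_i / b'_i]` and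
`[b_{i-1} / b'_{i-1}]`: the off-diagonal block records how the new lifts `s'(b'_{i-1})` differ
from the old ones, and that difference lies in `ker d = B_i`. So the `i`-th determinant gets
multiplied by `u_i u_{i-1}`, where `u_i = det [b_i / b'_i]`, and in the alternating product
these factors telescope to `u_N^{±1} / u_0`. Both `B_0` and `B_N` are trivial, so `u_0 = u_N = 1`.
-/

open Finset Module Matrix

theorem prod_range_mul_zpow_neg_one_pow {G₀ : Type*} [CommGroupWithZero G₀] (u : ℕ → G₀)
    (hu : ∀ i, u i ≠ 0) (n : ℕ) :
    ∏ i ∈ range n, (u (i + 1) * u i) ^ (-1 : ℤ) ^ (i + 1) = u n ^ (-1 : ℤ) ^ n / u 0 := by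
  induction n with
  | zero => simp [hu 0]
  | succ n ih =>
    rw [prod_range_succ, ih, mul_zpow, pow_succ, mul_neg_one, _root_.zpow_neg, _root_.zpow_neg]
    have := zpow_ne_zero ((-1 : ℤ) ^ n) (hu n)
    field_simp

namespace Module.Basis

variable {R M ι κ : Type*} [CommRing R] [AddCommGroup M] [Module R M]

theorem isUnit_det_toMatrix [Fintype ι] [DecidableEq ι] (b b' : Basis ι R M) :
    IsUnit (b.toMatrix b').det :=
  letI := b.invertibleToMatrix b'
  isUnit_det_of_invertible _

theorem det_toMatrix_of_subsingleton [Nontrivial R] [Subsingleton M] [Fintype ι] [DecidableEq ι]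
    (b b' : Basis ι R M) : (b.toMatrix b').det = 1 :=
  haveI : IsEmpty ι := ⟨fun i => b.ne_zero i (Subsingleton.elim _ _)⟩
  Matrix.det_isEmpty

theorem coe_eq_sum_toMatrix_smul [Fintype ι] {P : Submodule R M} (b : Basis ι R P)
    (v : κ → P) (a : κ) : (v a : M) = ∑ k, b.toMatrix v k a • (b k : M) := by
  conv_lhs => rw [← b.sum_toMatrix_smul_self v a]
  simp only [Submodule.coe_sum, Submodule.coe_smul]

theorem toMatrix_eq_toMatrix_mul [Fintype κ] (c : Basis ι R M) {v v' : κ → M}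
    (Q : Matrix κ κ R) (h : ∀ j, v' j = ∑ k, Q k j • v k) : c.toMatrix v' = c.toMatrix v * Q := by
  ext i j
  simp [toMatrix_apply, Matrix.mul_apply, h, map_sum, mul_comm]

theorem det_toMatrix_comp_equiv_eq_mul [Fintype ι] [DecidableEq ι] [Fintype κ] [DecidableEq κ]
    (c : Basis ι R M) (e : ι ≃ κ) {v v' : κ → M} (Q : Matrix κ κ R)
    (h : ∀ j, v' j = ∑ k, Q k j • v k) :
    (c.toMatrix fun q => v' (e q)).det = (c.toMatrix fun q => v (e q)).det * Q.det := by
  have hv : ∀ w : κ → M, c.toMatrix (fun q => w (e q)) = (c.toMatrix w).submatrix id e :=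
    fun _ => rfl
  rw [hv, hv, c.toMatrix_eq_toMatrix_mul Q h, ← submatrix_mul_equiv _ _ _ e, det_mul,
    det_submatrix_equiv_self]

end Module.Basis

section Splitting

variable {R M N : Type*} [CommRing R] [AddCommGroup M] [Module R M] [AddCommGroup N] [Module R N]
  {κ₁ κ₀ : Type*} [Fintype κ₁] [Fintype κ₀] [DecidableEq κ₁] [DecidableEq κ₀]
  {f : M →ₗ[R] N} {K : Submodule R M} {L : Submodule R N}

theorem exists_sum_elim_eq_sum_smul (hK : LinearMap.ker f ≤ K)
    (b₁ b₁' : Basis κ₁ R K) (b₀ b₀' : Basis κ₀ R L) {w₀ w₀' : κ₀ → M}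
    (hw₀ : ∀ a, f (w₀ a) = b₀ a) (hw₀' : ∀ a, f (w₀' a) = b₀' a) :
    ∃ Q : Matrix (κ₁ ⊕ κ₀) (κ₁ ⊕ κ₀) R,
      Q.det = (b₁.toMatrix b₁').det * (b₀.toMatrix b₀').det ∧
      ∀ j, Sum.elim (fun a => (b₁' a : M)) w₀' j =
        ∑ k, Q k j • Sum.elim (fun a => (b₁ a : M)) w₀ k := by
  set P₀ := b₀.toMatrix b₀'
  have hcorr : ∀ a, w₀' a - ∑ k, P₀ k a • w₀ k ∈ K := fun a => hK <| by
    simp [map_sum, hw₀, hw₀', P₀, ← b₀.coe_eq_sum_toMatrix_smul]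
  let X : Matrix κ₁ κ₀ R := fun p a => b₁.repr ⟨_, hcorr a⟩ p
  refine ⟨fromBlocks (b₁.toMatrix b₁') X 0 P₀, det_fromBlocks_zero₂₁ _ _ _, ?_⟩
  rintro (p | a) <;>
    simp only [Fintype.sum_sum_type, Sum.elim_inl, Sum.elim_inr, fromBlocks_apply₁₁,
      fromBlocks_apply₂₁, fromBlocks_apply₁₂, fromBlocks_apply₂₂, Matrix.zero_apply, zero_smul,
      sum_const_zero, add_zero]
  · exact b₁.coe_eq_sum_toMatrix_smul b₁' p
  · rw [← sub_eq_iff_eq_add]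
    exact b₁.coe_eq_sum_toMatrix_smul (fun a => ⟨_, hcorr a⟩) a

theorem det_toMatrix_sum_elim_eq_mul {ι : Type*} [Fintype ι] [DecidableEq ι] (c : Basis ι R M)
    (e : ι ≃ κ₁ ⊕ κ₀) (hK : LinearMap.ker f ≤ K) (b₁ b₁' : Basis κ₁ R K)
    (b₀ b₀' : Basis κ₀ R L) {w₀ w₀' : κ₀ → M}
    (hw₀ : ∀ a, f (w₀ a) = b₀ a) (hw₀' : ∀ a, f (w₀' a) = b₀' a) :
    (c.toMatrix fun q => Sum.elim (fun a => (b₁' a : M)) w₀' (e q)).det =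
      (c.toMatrix fun q => Sum.elim (fun a => (b₁ a : M)) w₀ (e q)).det *
        ((b₁.toMatrix b₁').det * (b₀.toMatrix b₀').det) := by
  obtain ⟨Q, hQ, hcol⟩ := exists_sum_elim_eq_sum_smul hK b₁ b₁' b₀ b₀' hw₀ hw₀'
  rw [← hQ]
  exact c.det_toMatrix_comp_equiv_eq_mul e Q hcol

end Splitting

/-- The torsion of a bounded acyclic chain complex over a field with preferred bases `c`
is independent of the choice of bases `b` of the boundary modules (and of the splittings):
the alternating products of the change-of-basis determinants agree.
(The complex is padded so that `C 0` is trivial; degrees `1, …, N` carry the complex.) -/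
theorem stmt_0 (F : Type*) [Field F]
    (C : ℕ → Type*) [∀ i, AddCommGroup (C i)] [∀ i, Module F (C i)]
    (N : ℕ) (hC0 : Subsingleton (C 0)) (hbound : ∀ i, N < i → Subsingleton (C i))
    (ι : ℕ → Type*) [∀ i, Fintype (ι i)] [∀ i, DecidableEq (ι i)]
    (c : ∀ i, Module.Basis (ι i) F (C i))
    (d : ∀ i, C (i + 1) →ₗ[F] C i)
    (hacyc : ∀ i, LinearMap.ker (d i) = LinearMap.range (d (i + 1)))
    (κ : ℕ → Type*) [∀ i, Fintype (κ i)]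
    (e : ∀ i, ι (i + 1) ≃ (κ (i + 1) ⊕ κ i))
    (b b' : ∀ i, Module.Basis (κ i) F ↥(LinearMap.range (d i)))
    (s s' : ∀ i, ↥(LinearMap.range (d i)) →ₗ[F] C (i + 1))
    (hs : ∀ i (x : ↥(LinearMap.range (d i))), d i (s i x) = (x : C i))
    (hs' : ∀ i (x : ↥(LinearMap.range (d i))), d i (s' i x) = (x : C i)) :
    (∏ i ∈ Finset.range N,
      ((c (i + 1)).toMatrix
        (fun q => Sum.elim (fun a => ((b (i + 1) a : ↥(LinearMap.range (d (i + 1)))) : C (i + 1)))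
          (fun a => s i (b i a)) (e i q))).det ^ ((-1 : ℤ) ^ (i + 1))) =
    (∏ i ∈ Finset.range N,
      ((c (i + 1)).toMatrix
        (fun q => Sum.elim (fun a => ((b' (i + 1) a : ↥(LinearMap.range (d (i + 1)))) : C (i + 1)))
          (fun a => s' i (b' i a)) (e i q))).det ^ ((-1 : ℤ) ^ (i + 1))) := by
  classical
  have hstep := fun i => det_toMatrix_sum_elim_eq_mul (c (i + 1)) (e i) (hacyc i).le
    (b (i + 1)) (b' (i + 1)) (b i) (b' i) (fun a => hs i (b i a)) (fun a => hs' i (b' i a))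
  simp_rw [hstep, mul_zpow _ (_ * _), prod_mul_distrib]
  set u : ℕ → F := fun i => ((b i).toMatrix (b' i)).det
  have hu : ∀ i, u i ≠ 0 := fun i => ((b i).isUnit_det_toMatrix (b' i)).ne_zero
  have hu0 : u 0 = 1 := (b 0).det_toMatrix_of_subsingleton (b' 0)
  have huN : u N = 1 := by
    have := hbound (N + 1) N.lt_succ_self
    have : Subsingleton (LinearMap.range (d N)) := Submodule.subsingleton_iff_eq_bot.2 <|
      LinearMap.range_eq_bot.2 (Subsingleton.elim _ _)
    exact (b N).det_toMatrix_of_subsingleton (b' N)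
  rw [prod_range_mul_zpow_neg_one_pow u hu, hu0, huN, _root_.one_zpow, div_one, mul_one]
end

section
/- For a 2-periodic acyclic chain complex over a ring R, the boundary module B_[0] is stably free if and only if B_[1] is stably free. -/
/-!
A stably free `B₀ = im d` is projective, so `d : C₁ → B₀` splits and
`C₁ ≅ ker d × B₀ = B₁ × B₀`. Hence `B₁ × (B₀ × Rˢ) ≅ C₁ × Rˢ` is finite free; by symmetry of
the complex the converse holds as well.
-/

open LinearMap

/-- Unlike `Module.IsStablyFree`, both the free complement and the sum are required to be
finitely generated. -/
def StablyFree (R : Type*) [Ring R] (M : Type*) [AddCommGroup M] [Module R M] : Prop :=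
  ∃ s k : ℕ, Nonempty ((M × (Fin s → R)) ≃ₗ[R] (Fin k → R))

namespace StablyFree

variable {R : Type*} [Ring R] {M K : Type*} [AddCommGroup M] [Module R M]
  [AddCommGroup K] [Module R K]

theorem projective (h : StablyFree R M) : Module.Projective R M := by
  obtain ⟨s, k, ⟨e⟩⟩ := h
  exact Module.Projective.of_split (e.toLinearMap ∘ₗ inl R M _) (fst R M _ ∘ₗ e.symm.toLinearMap)
    (by ext; simp)

theorem of_prod_equiv {n : ℕ} (e : (K × M) ≃ₗ[R] (Fin n → R)) (h : StablyFree R M) :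
    StablyFree R K := by
  obtain ⟨s, k, ⟨eM⟩⟩ := h
  exact ⟨k, n + s, ⟨((LinearEquiv.refl R K).prodCongr eM.symm ≪≫ₗ
    (LinearEquiv.prodAssoc R K M _).symm ≪≫ₗ e.prodCongr (LinearEquiv.refl R _)) ≪≫ₗ
    (LinearEquiv.sumArrowLequivProdArrow (Fin n) (Fin s) R R).symm ≪≫ₗ
    LinearEquiv.funCongrLeft R R finSumFinEquiv.symm⟩⟩

end StablyFree

theorem LinearMap.nonempty_ker_prod_range_equiv {R M N : Type*} [Ring R] [AddCommGroup M]
    [Module R M] [AddCommGroup N] [Module R N] (f : M →ₗ[R] N)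
    [Module.Projective R (range f)] : Nonempty ((ker f × range f) ≃ₗ[R] M) := by
  obtain ⟨g, hg⟩ := f.rangeRestrict.exists_rightInverse_of_surjective f.range_rangeRestrict
  exact ⟨lequivProdOfRightSplitExact (ker f).injective_subtype
    (by rw [Submodule.range_subtype, ker_rangeRestrict]) hg⟩

theorem StablyFree.range_of_ker_eq_range {R M N : Type*} [Ring R] [AddCommGroup M] [Module R M]
    [AddCommGroup N] [Module R N] {n : ℕ} {d : (Fin n → R) →ₗ[R] N} {δ : M →ₗ[R] (Fin n → R)}
    (h : ker d = range δ) (hd : StablyFree R (range d)) : StablyFree R (range δ) := by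
  have := hd.projective
  obtain ⟨e⟩ := d.nonempty_ker_prod_range_equiv
  exact hd.of_prod_equiv ((LinearEquiv.ofEq _ _ h).symm.prodCongr (LinearEquiv.refl R _) ≪≫ₗ e)

theorem stmt_6_general (R : Type*) [Ring R]
    (n0 n1 : ℕ)
    (d : (Fin n1 → R) →ₗ[R] (Fin n0 → R)) (δ : (Fin n0 → R) →ₗ[R] (Fin n1 → R))
    (h0 : LinearMap.ker δ = LinearMap.range d)
    (h1 : LinearMap.ker d = LinearMap.range δ) :
    (∃ s k : ℕ, Nonempty ((↥(LinearMap.range d) × (Fin s → R)) ≃ₗ[R] (Fin k → R))) ↔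
    (∃ s k : ℕ, Nonempty ((↥(LinearMap.range δ) × (Fin s → R)) ≃ₗ[R] (Fin k → R))) :=
  ⟨StablyFree.range_of_ker_eq_range h1, StablyFree.range_of_ker_eq_range h0⟩

/-- For a 2-periodic acyclic complex of finitely generated free modules over a ring with
the invariant basis property, the boundary module `B₀ = im d` is stably free iff
`B₁ = im δ` is stably free. -/
theorem stmt_6 (R : Type*) [Ring R] [InvariantBasisNumber R]
    (n0 n1 : ℕ)
    (d : (Fin n1 → R) →ₗ[R] (Fin n0 → R)) (δ : (Fin n0 → R) →ₗ[R] (Fin n1 → R))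
    (hdδ : d ∘ₗ δ = 0) (hδd : δ ∘ₗ d = 0)
    (h0 : LinearMap.ker δ = LinearMap.range d)
    (h1 : LinearMap.ker d = LinearMap.range δ) :
    (∃ s k : ℕ, Nonempty ((↥(LinearMap.range d) × (Fin s → R)) ≃ₗ[R] (Fin k → R))) ↔
    (∃ s k : ℕ, Nonempty ((↥(LinearMap.range δ) × (Fin s → R)) ≃ₗ[R] (Fin k → R))) :=
  stmt_6_general R n0 n1 d δ h0 h1
end

section
/- In the group ring ℤ[t]/(t^p − 1) for p an odd prime, the ideals (t−1)·R and (1+t+...+t^{p−1})·R are not projective R-modules. -/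
/-!
If a principal ideal `aA` of a commutative ring is projective, the surjection `r ↦ r * a` onto it
splits, and then the annihilator of `a` is generated by an idempotent. Let `t` be the class of `X`
in `R = ℤ[X]/(Xᵖ - 1)`. The only idempotents of `R` are `0` and `1`: an idempotent `e` of
augmentation `0` lies in `(t - 1)R`, so `e = eᵖ ∈ (t - 1)ᵖR ⊆ pR` (freshman's dream, as `tᵖ = 1`),
hence `e ∈ ⋂ pⁿR = 0` because `R` is free of finite rank over `ℤ`. But `t - 1` and
`1 + t + ⋯ + tᵖ⁻¹` are nonzero and annihilate each other, so neither annihilator is `0` or `R`.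
-/

open Polynomial

section

variable {A : Type*} [CommRing A]

theorem exists_isIdempotentElem_of_projective_span_singleton (a : A)
    [Module.Projective A (Ideal.span {a})] :
    ∃ e : A, IsIdempotentElem e ∧ ∀ r : A, r * a = 0 ↔ r * e = r := by
  let f : A →ₗ[A] Ideal.span {a} :=
    LinearMap.codRestrict _ (LinearMap.toSpanSingleton A A a)
      fun r ↦ Ideal.mul_mem_left _ r (Ideal.mem_span_singleton_self a)
  have hf : Function.Surjective f := by
    rintro ⟨x, hx⟩
    obtain ⟨r, rfl⟩ := Ideal.mem_span_singleton'.mp hx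
    exact ⟨r, rfl⟩
  obtain ⟨s, hs⟩ := Module.projective_lifting_property f LinearMap.id hf
  have hfs (x) : (f (s x) : A) = x := congrArg Subtype.val (LinearMap.congr_fun hs x)
  set u := s ⟨a, Ideal.mem_span_singleton_self a⟩
  have hua : u * a = a := hfs _
  have hu (r : A) (hr : r * a = 0) : r * u = 0 := by
    have : r • (⟨a, Ideal.mem_span_singleton_self a⟩ : Ideal.span {a}) = 0 := Subtype.ext hr
    rw [← smul_eq_mul, ← map_smul, this, map_zero]
  have hann (r : A) : r * a = 0 ↔ r * (1 - u) = r := by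
    refine ⟨fun hr ↦ by rw [mul_sub, hu r hr, mul_one, sub_zero], fun hr ↦ ?_⟩
    rw [← hr, mul_assoc, sub_mul, hua, one_mul, sub_self, mul_zero]
  exact ⟨1 - u, (hann _).mp (by rw [sub_mul, hua, one_mul, sub_self]), hann⟩

theorem not_projective_span_singleton_of_mul_eq_zero
    (hA : ∀ e : A, IsIdempotentElem e → e = 0 ∨ e = 1) {a b : A} (ha : a ≠ 0) (hb : b ≠ 0)
    (hab : b * a = 0) : ¬ Module.Projective A (Ideal.span {a}) := by
  intro
  obtain ⟨e, he, hann⟩ := exists_isIdempotentElem_of_projective_span_singleton a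
  rcases hA e he with rfl | rfl
  · exact hb (by simpa using ((hann b).mp hab).symm)
  · exact ha (by simpa using (hann 1).mpr (mul_one 1))

theorem IsIdempotentElem.eq_zero_of_mem {I : Ideal A} [IsHausdorff I A] {e : A}
    (he : IsIdempotentElem e) (heI : e ∈ I) : e = 0 := by
  refine IsHausdorff.haus ‹_› e fun n ↦ ?_
  rw [SModEq.zero, smul_eq_mul, Ideal.mul_top]
  cases n with
  | zero => simp
  | succ n => simpa [he.pow_succ_eq] using Ideal.pow_mem_pow heI (n + 1)

theorem exists_sub_one_pow_eq_mul_of_pow_eq_one {p : ℕ} (hp : p.Prime) {t : A} (ht : t ^ p = 1) :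
    ∃ r : A, (t - 1) ^ p = p * r := by
  obtain ⟨r, hr⟩ := exists_add_pow_prime_eq hp (t - 1) 1
  refine ⟨-((t - 1) * r), ?_⟩
  rw [sub_add_cancel, ht, one_pow] at hr
  linear_combination -hr

end

abbrev CyclicGroupRing (n : ℕ) : Type := ℤ[X] ⧸ Ideal.span {(X ^ n - 1 : ℤ[X])}

namespace CyclicGroupRing

variable {n : ℕ}

noncomputable abbrev gen (n : ℕ) : CyclicGroupRing n := Ideal.Quotient.mk _ X

theorem gen_pow : gen n ^ n = 1 := by
  rw [gen, ← map_pow, ← map_one (Ideal.Quotient.mk _), Ideal.Quotient.eq]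
  exact Ideal.mem_span_singleton_self _

theorem gen_sub_one_mul_sum : (gen n - 1) * ∑ i ∈ Finset.range n, gen n ^ i = 0 := by
  rw [mul_comm, geom_sum_mul, gen_pow, sub_self]

noncomputable def augmentation (n : ℕ) : CyclicGroupRing n →+* ℤ :=
  Ideal.Quotient.lift _ (evalRingHom 1) fun f hf ↦ by
    obtain ⟨g, rfl⟩ := Ideal.mem_span_singleton'.mp hf
    simp

@[simp]
theorem augmentation_mk (f : ℤ[X]) : augmentation n (Ideal.Quotient.mk _ f) = f.eval 1 := rfl

theorem mem_span_gen_sub_one_of_augmentation_eq_zero {x : CyclicGroupRing n}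
    (hx : augmentation n x = 0) : x ∈ Ideal.span {gen n - 1} := by
  obtain ⟨f, rfl⟩ := Ideal.Quotient.mk_surjective x
  obtain ⟨g, rfl⟩ := dvd_iff_isRoot.mpr hx
  exact Ideal.mem_span_singleton'.mpr ⟨Ideal.Quotient.mk _ g, by simp [mul_comm]⟩

theorem gen_sub_one_ne_zero (hn : 1 < n) : gen n - 1 ≠ 0 := by
  rw [gen, ← map_one (Ideal.Quotient.mk _), ← map_sub, Ne, Ideal.Quotient.eq_zero_iff_mem,
    Ideal.mem_span_singleton, ← C_1]
  intro h
  have := natDegree_le_of_dvd h (X_sub_C_ne_zero 1)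
  rw [natDegree_X_pow_sub_C, natDegree_X_sub_C] at this
  omega

theorem sum_gen_pow_ne_zero (hn : n ≠ 0) : ∑ i ∈ Finset.range n, gen n ^ i ≠ 0 := by
  intro h
  have := congrArg (augmentation n) h
  simp at this
  omega

theorem isHausdorff_span_natCast (hn : n ≠ 0) {m : ℕ} (hm : m ≠ 1) :
    IsHausdorff (Ideal.span {(m : CyclicGroupRing n)}) (CyclicGroupRing n) := by
  have hmonic : (X ^ n - 1 : ℤ[X]).Monic := by simpa using monic_X_pow_sub_C (1 : ℤ) hn
  have := hmonic.free_quotient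
  have := hmonic.finite_quotient
  have hI : Ideal.span {(m : ℤ)} ≠ ⊤ := by
    rw [Ne, Ideal.span_singleton_eq_top, Int.isUnit_iff]
    omega
  have := IsHausdorff.of_isTorsionFree _ (CyclicGroupRing n) hI
  rw [← IsHausdorff.map_algebraMap_iff (S := CyclicGroupRing n), Ideal.map_span] at this
  simpa using this

theorem eq_zero_of_isIdempotentElem_of_augmentation_eq_zero {p : ℕ} (hp : p.Prime)
    {e : CyclicGroupRing p} (he : IsIdempotentElem e) (hε : augmentation p e = 0) : e = 0 := by
  have := isHausdorff_span_natCast hp.ne_zero hp.ne_one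
  refine he.eq_zero_of_mem (I := Ideal.span {(p : CyclicGroupRing p)}) ?_
  obtain ⟨c, rfl⟩ := Ideal.mem_span_singleton'.mp (mem_span_gen_sub_one_of_augmentation_eq_zero hε)
  obtain ⟨r, hr⟩ := exists_sub_one_pow_eq_mul_of_pow_eq_one hp gen_pow
  rw [← he.pow_succ_eq (p - 1), Nat.sub_add_cancel hp.one_le, mul_pow, hr]
  exact Ideal.mem_span_singleton'.mpr ⟨c ^ p * r, by ring⟩

theorem isIdempotentElem_iff {p : ℕ} (hp : p.Prime) {e : CyclicGroupRing p} :
    IsIdempotentElem e ↔ e = 0 ∨ e = 1 := by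
  refine ⟨fun he ↦ ?_, by rintro (rfl | rfl) <;> simp [IsIdempotentElem]⟩
  rcases IsIdempotentElem.iff_eq_zero_or_one.mp (he.map (augmentation p)) with h | h
  · exact .inl (eq_zero_of_isIdempotentElem_of_augmentation_eq_zero hp he h)
  · refine .inr (eq_of_sub_eq_zero ?_).symm
    exact eq_zero_of_isIdempotentElem_of_augmentation_eq_zero hp he.one_sub (by simp [h])

end CyclicGroupRing

theorem stmt_9_general (p : ℕ) (hp : p.Prime) :
    ¬ Module.Projective (Polynomial ℤ ⧸ Ideal.span ({Polynomial.X ^ p - 1} : Set (Polynomial ℤ)))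
      ↥(Ideal.span
        ({(Ideal.Quotient.mk (Ideal.span ({Polynomial.X ^ p - 1} : Set (Polynomial ℤ)))) Polynomial.X - 1} :
          Set (Polynomial ℤ ⧸ Ideal.span ({Polynomial.X ^ p - 1} : Set (Polynomial ℤ))))) ∧
    ¬ Module.Projective (Polynomial ℤ ⧸ Ideal.span ({Polynomial.X ^ p - 1} : Set (Polynomial ℤ)))
      ↥(Ideal.span
        ({∑ i ∈ Finset.range p,
          ((Ideal.Quotient.mk (Ideal.span ({Polynomial.X ^ p - 1} : Set (Polynomial ℤ)))) Polynomial.X) ^ i} :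
          Set (Polynomial ℤ ⧸ Ideal.span ({Polynomial.X ^ p - 1} : Set (Polynomial ℤ))))) := by
  have hidem (e : CyclicGroupRing p) : IsIdempotentElem e → e = 0 ∨ e = 1 :=
    (CyclicGroupRing.isIdempotentElem_iff hp).mp
  have hτ := CyclicGroupRing.gen_sub_one_ne_zero hp.one_lt
  have hσ := CyclicGroupRing.sum_gen_pow_ne_zero hp.ne_zero
  have hτσ := CyclicGroupRing.gen_sub_one_mul_sum (n := p)
  exact ⟨not_projective_span_singleton_of_mul_eq_zero hidem hτ hσ (by rw [mul_comm, hτσ]),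
    not_projective_span_singleton_of_mul_eq_zero hidem hσ hτ hτσ⟩

/-- In `R = ℤ[t]/(tᵖ - 1)`, `p` an odd prime, the ideals `(t-1)R` and
`(1 + t + ⋯ + tᵖ⁻¹)R` are not projective `R`-modules. -/
theorem stmt_9 (p : ℕ) (hp : p.Prime) (hodd : Odd p) :
    ¬ Module.Projective (Polynomial ℤ ⧸ Ideal.span ({Polynomial.X ^ p - 1} : Set (Polynomial ℤ)))
      ↥(Ideal.span
        ({(Ideal.Quotient.mk (Ideal.span ({Polynomial.X ^ p - 1} : Set (Polynomial ℤ)))) Polynomial.X - 1} :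
          Set (Polynomial ℤ ⧸ Ideal.span ({Polynomial.X ^ p - 1} : Set (Polynomial ℤ))))) ∧
    ¬ Module.Projective (Polynomial ℤ ⧸ Ideal.span ({Polynomial.X ^ p - 1} : Set (Polynomial ℤ)))
      ↥(Ideal.span
        ({∑ i ∈ Finset.range p,
          ((Ideal.Quotient.mk (Ideal.span ({Polynomial.X ^ p - 1} : Set (Polynomial ℤ)))) Polynomial.X) ^ i} :
          Set (Polynomial ℤ ⧸ Ideal.span ({Polynomial.X ^ p - 1} : Set (Polynomial ℤ))))) :=
  stmt_9_general p hp
end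

section
/- Let H_* = Λ_F[α₁, β₁, ..., α_g, β_g, z]/(α₁β₁ = ... = α_gβ_g, α_iβ_j = 0 for i ≠ j) be the homology ring of S¹ × Σ_g with g ≥ 2, all generators of degree 2 (in a 3-dimensional grading). Any square-zero derivation d₁ of degree 1 (satisfying the Leibniz rule) making the complex acyclic must satisfy d₁(α_i) = d₁(β_i) = 0 for all i and d₁(z) = c·1 with c ≠ 0. -/
/-- For the homology ring of `L = S¹ × Σ_g`, `g ≥ 2` (generators `αᵢ, βᵢ, z` of degree 2 with
`αᵢβᵢ = α₁β₁`, `αᵢβⱼ = 0` for `i ≠ j`), any square-zero degree-1 derivation `d₁` (Leibniz rule,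
mapping degree-2 classes to multiples of the unit) making the complex acyclic must satisfy
`d₁(αᵢ) = d₁(βᵢ) = 0` for all `i`, and `d₁(z) = c·1` with `c ≠ 0`. -/
theorem stmt_14 (F A : Type*) [Field F] [Ring A] [Algebra F A] [Nontrivial A]
    (g : ℕ) (hg : 2 ≤ g)
    (α β : Fin g → A) (z : A)
    (hind : LinearIndependent F (Sum.elim α (Sum.elim β (fun _ : Unit => z))))
    (hrel0 : ∀ i j, i ≠ j → α i * β j = 0)
    (hrel1 : ∀ i, α i * β i = α ⟨0, by omega⟩ * β ⟨0, by omega⟩)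
    (H2 : Submodule F A)
    (hH2 : H2 = Submodule.span F (Set.range α ∪ Set.range β ∪ {z}))
    (d : A →ₗ[F] A) (hd2 : d ∘ₗ d = 0)
    (hdeg : ∀ x ∈ H2, d x ∈ Submodule.span F ({1} : Set A))
    (hLeib : ∀ x ∈ H2, ∀ y ∈ H2, d (x * y) = d x * y - x * d y)
    (hacyc : ∃ w ∈ H2, d w = 1) :
    (∀ i, d (α i) = 0) ∧ (∀ i, d (β i) = 0) ∧ ∃ c : F, c ≠ 0 ∧ d z = c • (1 : A) := by
  subst hH2
  have hαmem : ∀ i, α i ∈ Submodule.span F (Set.range α ∪ Set.range β ∪ {z}) := fun i =>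
    Submodule.subset_span (by simp)
  have hβmem : ∀ i, β i ∈ Submodule.span F (Set.range α ∪ Set.range β ∪ {z}) := fun i =>
    Submodule.subset_span (by simp)
  have hzmem : z ∈ Submodule.span F (Set.range α ∪ Set.range β ∪ {z}) :=
    Submodule.subset_span (by simp)
  choose a ha using fun i => (Submodule.mem_span_singleton).1 (hdeg (α i) (hαmem i))
  choose b hb using fun i => (Submodule.mem_span_singleton).1 (hdeg (β i) (hβmem i))
  obtain ⟨c, hc⟩ := (Submodule.mem_span_singleton).1 (hdeg z hzmem)
  rw [Fintype.linearIndependent_iff] at hind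
  have key : ∀ i j : Fin g, i ≠ j → a i = 0 ∧ b j = 0 := by
    intro i j hij
    have h0 : d (α i * β j) = 0 := by rw [hrel0 i j hij]; simp
    rw [hLeib _ (hαmem i) _ (hβmem j), ← ha, ← hb] at h0
    have h1 : a i • β j + (-(b j)) • α i = 0 := by
      rw [smul_mul_assoc, one_mul, mul_smul_comm, mul_one] at h0
      rw [neg_smul]; rw [sub_eq_zero] at h0; rw [add_neg_eq_zero]; exact h0
    set cf : (Fin g ⊕ (Fin g ⊕ Unit)) → F := fun k =>
      match k with
      | .inl i' => if i' = i then -(b j) else 0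
      | .inr (.inl j') => if j' = j then a i else 0
      | .inr (.inr _) => 0 with hcf
    have hsum : ∑ k, cf k • Sum.elim α (Sum.elim β (fun _ : Unit => z)) k = 0 := by
      rw [Fintype.sum_sum_type, Fintype.sum_sum_type]
      simp only [hcf, Sum.elim_inl, Sum.elim_inr]
      simp only [ite_smul, zero_smul, Finset.sum_ite_eq', Finset.mem_univ, if_true,
        Finset.sum_const_zero, add_zero]
      rw [add_comm]; exact h1
    have := hind cf hsum
    constructor
    · have := this (.inr (.inl j)); simpa [hcf] using this
    · have h := this (.inl i); simp [hcf] at h; exact h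
  have hane : ∀ i, a i = 0 := by
    intro i
    obtain ⟨j, hj⟩ : ∃ j : Fin g, j ≠ i := by
      rcases Decidable.eq_or_ne i ⟨0, by omega⟩ with h | h
      · exact ⟨⟨1, by omega⟩, by subst h; simp [Fin.ext_iff]⟩
      · exact ⟨⟨0, by omega⟩, fun hh => h hh.symm⟩
    exact (key i j (Ne.symm hj)).1
  have hbne : ∀ j, b j = 0 := by
    intro j
    obtain ⟨i, hi⟩ : ∃ i : Fin g, i ≠ j := by
      rcases Decidable.eq_or_ne j ⟨0, by omega⟩ with h | h
      · exact ⟨⟨1, by omega⟩, by subst h; simp [Fin.ext_iff]⟩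
      · exact ⟨⟨0, by omega⟩, Ne.symm h⟩
    exact (key i j hi).2
  have hdα : ∀ i, d (α i) = 0 := fun i => by rw [← ha, hane, zero_smul]
  have hdβ : ∀ i, d (β i) = 0 := fun i => by rw [← hb, hbne, zero_smul]
  refine ⟨hdα, hdβ, c, ?_, hc.symm⟩
  intro hc0
  have hdz : d z = 0 := by rw [← hc, hc0, zero_smul]
  have hker : Submodule.span F (Set.range α ∪ Set.range β ∪ {z}) ≤ LinearMap.ker d := by
    rw [Submodule.span_le]
    rintro x (h | h)
    · rcases h with ⟨i, rfl⟩ | ⟨i, rfl⟩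
      · exact LinearMap.mem_ker.2 (hdα i)
      · exact LinearMap.mem_ker.2 (hdβ i)
    · rcases h with rfl; exact LinearMap.mem_ker.2 hdz
  obtain ⟨w, hw, hdw⟩ := hacyc
  have : d w = 0 := hker hw
  rw [this] at hdw
  exact one_ne_zero hdw.symm
end

section
/- Under Assumption (⋆) (the setting of the previous statement), the torsion of the acyclic complex (H_*(S^{2k+1} × V; F), d₁), computed with respect to a basis coming from a ℤ-basis of the free homology of V via Künneth, equals r^{−χ(V)} in F^×/±1, where χ(V) = ∑_r (−1)^r dim V_r. -/
/-!
By the Leibniz rule, `d σ = r` and `σ² = 0`, one has `d (σ x) = r x - σ d x` and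
`σ d (σ x) = r σ x`. In degree `j` the first block of columns `r⁻¹ σ (r⁻¹ d w)` is therefore
`r⁻¹ w`, and the second `r⁻¹ d (σ u) = u - r⁻¹ σ d u` is `u` plus a combination of the `w`'s,
because `σ` kills the `w`'s and sends the `u`'s to `w`'s. The change-of-basis matrix is block
triangular with determinant `r^{-dim V_j}`, and the alternating product is `r^{-χ(V)}`.
-/

open Submodule Set

theorem Finset.prod_zpow_eq_zpow_sum {ι G₀ : Type*} [CommGroupWithZero G₀] {a : G₀} (ha : a ≠ 0)
    (s : Finset ι) (f : ι → ℤ) : ∏ i ∈ s, a ^ f i = a ^ ∑ i ∈ s, f i := by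
  classical
  induction s using Finset.induction with
  | empty => simp
  | insert i s hi ih => rw [prod_insert hi, sum_insert hi, ih, zpow_add₀ ha]

theorem Submodule.map_le_of_basis {ι R M M' : Type*} [Ring R] [AddCommGroup M] [Module R M]
    [AddCommGroup M'] [Module R M'] {N : Submodule R M} (b : Module.Basis ι R N)
    (f : M →ₗ[R] M') {S : Submodule R M'} (h : ∀ i, f (b i) ∈ S) : N.map f ≤ S :=
  calc N.map f = (span R (range b)).map (f ∘ₗ N.subtype) := by
        rw [b.span_eq, map_top, LinearMap.range_comp, range_subtype]
    _ ≤ S := by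
        rw [map_span, span_le]
        rintro _ ⟨_, ⟨i, rfl⟩, rfl⟩
        exact h i

theorem Module.Basis.det_toMatrix_eq_pow_of_triangular {ι κ R M : Type*} [CommRing R]
    [AddCommGroup M] [Module R M] [Fintype ι] [Fintype κ] [DecidableEq ι] [DecidableEq κ]
    (b : Module.Basis (ι ⊕ κ) R M) (v : ι ⊕ κ → M) (c : R)
    (hinl : ∀ i, v (.inl i) = c • b (.inl i))
    (hinr : ∀ q, v (.inr q) - b (.inr q) ∈ span R (range (b ∘ Sum.inl))) :
    (b.toMatrix v).det = c ^ Fintype.card ι := by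
  have hrepr : ∀ x ∈ span R (range (b ∘ Sum.inl)), ∀ q, b.repr x (.inr q) = 0 := by
    intro x hx q
    have hker : span R (range (b ∘ Sum.inl)) ≤
        LinearMap.ker (Finsupp.lapply (Sum.inr q) ∘ₗ b.repr.toLinearMap) :=
      span_le.2 (range_subset_iff.2 fun i => by simp)
    simpa using hker hx
  have hrepr_inr : ∀ p q, b.repr (v (.inr q)) (.inr p) = (1 : Matrix κ κ R) p q := fun p q => by
    rw [← sub_add_cancel (v (.inr q)) (b (.inr q)), map_add, Finsupp.add_apply,
      hrepr _ (hinr q), zero_add, repr_self, Finsupp.single_apply, Matrix.one_apply]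
    simp [eq_comm]
  have hM : b.toMatrix v =
      Matrix.fromBlocks (c • 1) (.of fun i q => b.repr (v (.inr q)) (.inl i)) 0 1 := by
    ext (i | p) (j | q)
    all_goals simp [toMatrix_apply, hinl, hrepr_inr, Finsupp.single_apply, Matrix.one_apply, eq_comm,
      Matrix.fromBlocks_apply₁₁]
  rw [hM, Matrix.det_fromBlocks_zero₂₁, Matrix.det_smul, Matrix.det_one, Matrix.det_one, mul_one,
    mul_one]

section Leibniz

variable {R A : Type*} [CommRing R] [Ring A] [Algebra R A] {σ : A} {d : A →ₗ[R] A} {r : R}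

theorem map_mul_left_eq_smul_sub (hdσ : d σ = r • 1)
    (hLeib : ∀ x, d (σ * x) = d σ * x - σ * d x) (x : A) : d (σ * x) = r • x - σ * d x := by
  rw [hLeib, hdσ, smul_one_mul]

theorem mul_map_mul_left_eq_smul (hσσ : σ * σ = 0) (hdσ : d σ = r • 1)
    (hLeib : ∀ x, d (σ * x) = d σ * x - σ * d x) (x : A) : σ * d (σ * x) = r • (σ * x) := by
  rw [map_mul_left_eq_smul_sub hdσ hLeib, mul_sub, mul_smul_comm, ← mul_assoc, hσσ, zero_mul,
    sub_zero]

end Leibniz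

theorem det_toMatrix_eq_inv_pow {F A ι κ : Type*} [Field F] [Ring A] [Algebra F A]
    [Fintype ι] [Fintype κ] [DecidableEq ι] [DecidableEq κ] {σ : A} {d : A →ₗ[F] A} {r : F}
    (hr : r ≠ 0) (hσσ : σ * σ = 0) (hdσ : d σ = r • 1)
    (hLeib : ∀ x, d (σ * x) = d σ * x - σ * d x) {N : Submodule F A}
    (b : Module.Basis (ι ⊕ κ) F N) (w u' : ι → A) (u w' : κ → A)
    (hu' : ∀ i, σ * u' i = w i) (hu : ∀ q, σ * u q = w' q)
    (hb : ∀ p, (b p : A) = Sum.elim w u p) (hσdu : ∀ q, σ * d (u q) ∈ span F (range w))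
    (v : ι ⊕ κ → N) (hv : ∀ p, (v p : A) = Sum.elim (fun i => r⁻¹ • (σ * (r⁻¹ • d (w i))))
      (fun q => r⁻¹ • d (w' q)) p) :
    (b.toMatrix v).det = r⁻¹ ^ Fintype.card ι := by
  refine b.det_toMatrix_eq_pow_of_triangular v r⁻¹ (fun i => ?_) (fun q => ?_)
  · ext
    rw [coe_smul, hv, hb, Sum.elim_inl, Sum.elim_inl, ← hu', mul_smul_comm,
      mul_map_mul_left_eq_smul hσσ hdσ hLeib, smul_smul, smul_smul, mul_assoc, inv_mul_cancel₀ hr,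
      mul_one]
  · have hrange : N.subtype '' range (b ∘ Sum.inl) = range w := by
      rw [← range_comp]; congr 1; ext i; exact hb (.inl i)
    rw [← apply_mem_span_image_iff_mem_span N.injective_subtype, hrange, map_sub, subtype_apply,
      subtype_apply, hv, hb, Sum.elim_inr, Sum.elim_inr, ← hu, map_mul_left_eq_smul_sub hdσ hLeib,
      smul_sub, smul_smul, inv_mul_cancel₀ hr, one_smul, sub_sub_cancel_left]
    exact neg_mem (smul_mem _ _ (hσdu q))

theorem stmt_17_general (F A : Type*) [Field F] [Ring A] [Algebra F A]
    (k n : ℕ)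
    (ι : ℤ → Type*) [∀ j, Fintype (ι j)] [∀ j, DecidableEq (ι j)]
    (H : ℤ → Submodule F A)
    (u w : ∀ j : ℤ, ι j → A)
    (hu : ∀ j i, u j i ∈ H (j + (2 * (k : ℤ) + 1)))
    (σ : A) (hσσ : σ * σ = 0)
    (hσu : ∀ j i, σ * u j i = w j i)
    (hσw : ∀ j i, σ * w j i = 0)
    (d : A →ₗ[F] A)
    (hdeg : ∀ j : ℤ, ∀ x ∈ H j, d x ∈ H (j + (2 * (k : ℤ) + 1)))
    (r : F) (hr : r ≠ 0)
    (hdσ : d σ = r • (1 : A))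
    (hLeibσ : ∀ x : A, d (σ * x) = d σ * x - σ * d x)
    (hb : ∀ j : ℤ, Module.Basis (ι j ⊕ ι (j - (2 * (k : ℤ) + 1))) F ↥(H j))
    (hhb : ∀ (j : ℤ) p, ((hb j p : A)) = Sum.elim (w j) (u (j - (2 * (k : ℤ) + 1))) p)
    (Q : ∀ j : ℤ, (ι j ⊕ ι (j - (2 * (k : ℤ) + 1))) → ↥(H j))
    (hQ : ∀ (j : ℤ) p, ((Q j p : A)) =
      Sum.elim (fun i : ι j => r⁻¹ • (σ * (r⁻¹ • d (w j i))))
        (fun i : ι (j - (2 * (k : ℤ) + 1)) => r⁻¹ • d (w (j - (2 * (k : ℤ) + 1)) i)) p) :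
    (∏ jj ∈ Finset.range (n + 1), ((hb (jj : ℤ)).toMatrix (Q (jj : ℤ))).det ^ ((-1 : ℤ) ^ jj))
      = r ^ (-(∑ jj ∈ Finset.range (n + 1),
          (-1 : ℤ) ^ jj * (Fintype.card (ι (jj : ℤ)) : ℤ))) ∨
    (∏ jj ∈ Finset.range (n + 1), ((hb (jj : ℤ)).toMatrix (Q (jj : ℤ))).det ^ ((-1 : ℤ) ^ jj))
      = -(r ^ (-(∑ jj ∈ Finset.range (n + 1),
          (-1 : ℤ) ^ jj * (Fintype.card (ι (jj : ℤ)) : ℤ)))) := by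
  -- The degree shift is an equation, not `j' - (2k+1)` itself, so that `ι j` need not be cast.
  have hspan : ∀ j' j, j' - (2 * (k : ℤ) + 1) = j → ∀ y ∈ H j', σ * y ∈ span F (range (w j)) := by
    rintro j' _ rfl y hy
    refine map_le_of_basis (hb j') (LinearMap.mulLeft F σ) (fun p => ?_) ⟨y, hy, rfl⟩
    rcases p with i | i
    · simp [hhb, hσw]
    · simpa [hhb, hσu] using subset_span (mem_range_self i)
  have hdet : ∀ j : ℤ, ((hb j).toMatrix (Q j)).det = r⁻¹ ^ Fintype.card (ι j) := fun j =>
    det_toMatrix_eq_inv_pow hr hσσ hdσ hLeibσ (hb j) (w j) (u j) _ _ (hσu j) (hσu _) (hhb j)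
      (fun q => hspan _ j (by ring) _ (hdeg _ _ (hu _ q))) (Q j) (hQ j)
  left
  calc ∏ jj ∈ Finset.range (n + 1), ((hb (jj : ℤ)).toMatrix (Q (jj : ℤ))).det ^ ((-1 : ℤ) ^ jj)
      = ∏ jj ∈ Finset.range (n + 1),
          r ^ (-((-1 : ℤ) ^ jj * (Fintype.card (ι (jj : ℤ)) : ℤ))) := by
        refine Finset.prod_congr rfl fun jj _ => ?_
        rw [hdet, inv_pow, ← zpow_natCast, ← zpow_neg, ← zpow_mul, neg_mul, mul_comm]
    _ = _ := by rw [Finset.prod_zpow_eq_zpow_sum hr, Finset.sum_neg_distrib]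

/-- Under Assumption (⋆) for `L = S^{2k+1} × V` (Künneth bases `w j, u (j-(2k+1))` of
`H j`, square-zero degree-(2k+1) derivation `d₁` with `d₁ σ = r·1`, `r ≠ 0`), the torsion
of the acyclic complex `(H_*(L;F), d₁)`, computed with respect to the Künneth bases,
equals `r^{-χ(V)}` in `F^×/±1`, where `χ(V) = ∑ⱼ (-1)ʲ dim Vⱼ`. -/
theorem stmt_17 (F A : Type*) [Field F] [Ring A] [Algebra F A]
    (k n : ℕ)
    (ι : ℤ → Type*) [∀ j, Fintype (ι j)] [∀ j, DecidableEq (ι j)]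
    (hιneg : ∀ j : ℤ, j < 0 → IsEmpty (ι j))
    (hιtop : ∀ j : ℤ, (n : ℤ) - (2 * (k : ℤ) + 1) < j → IsEmpty (ι j))
    (H : ℤ → Submodule F A)
    (u w : ∀ j : ℤ, ι j → A)
    (hu : ∀ j i, u j i ∈ H (j + (2 * (k : ℤ) + 1)))
    (hw : ∀ j i, w j i ∈ H j)
    (σ : A) (hσσ : σ * σ = 0)
    (hσu : ∀ j i, σ * u j i = w j i)
    (hσw : ∀ j i, σ * w j i = 0)
    (hσdeg : ∀ j : ℤ, ∀ x ∈ H j, σ * x ∈ H (j - (2 * (k : ℤ) + 1)))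
    (d : A →ₗ[F] A) (hd2 : d ∘ₗ d = 0)
    (hdeg : ∀ j : ℤ, ∀ x ∈ H j, d x ∈ H (j + (2 * (k : ℤ) + 1)))
    (r : F) (hr : r ≠ 0)
    (hdσ : d σ = r • (1 : A))
    (hLeibσ : ∀ x : A, d (σ * x) = d σ * x - σ * d x)
    (hb : ∀ j : ℤ, Module.Basis (ι j ⊕ ι (j - (2 * (k : ℤ) + 1))) F ↥(H j))
    (hhb : ∀ (j : ℤ) p, ((hb j p : A)) = Sum.elim (w j) (u (j - (2 * (k : ℤ) + 1))) p)
    (Q : ∀ j : ℤ, (ι j ⊕ ι (j - (2 * (k : ℤ) + 1))) → ↥(H j))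
    (hQ : ∀ (j : ℤ) p, ((Q j p : A)) =
      Sum.elim (fun i : ι j => r⁻¹ • (σ * (r⁻¹ • d (w j i))))
        (fun i : ι (j - (2 * (k : ℤ) + 1)) => r⁻¹ • d (w (j - (2 * (k : ℤ) + 1)) i)) p) :
    (∏ jj ∈ Finset.range (n + 1), ((hb (jj : ℤ)).toMatrix (Q (jj : ℤ))).det ^ ((-1 : ℤ) ^ jj))
      = r ^ (-(∑ jj ∈ Finset.range (n + 1),
          (-1 : ℤ) ^ jj * (Fintype.card (ι (jj : ℤ)) : ℤ))) ∨
    (∏ jj ∈ Finset.range (n + 1), ((hb (jj : ℤ)).toMatrix (Q (jj : ℤ))).det ^ ((-1 : ℤ) ^ jj))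
      = -(r ^ (-(∑ jj ∈ Finset.range (n + 1),
          (-1 : ℤ) ^ jj * (Fintype.card (ι (jj : ℤ)) : ℤ)))) :=
  stmt_17_general F A k n ι H u w hu σ hσσ hσu hσw d hdeg r hr hdσ hLeibσ hb hhb Q hQ
end

section
/- For the homology ring of the n-torus (n ≥ 2) over a field F, generated as an algebra by classes x₁,...,x_n of degree n−1, any square-zero degree-1 derivation d₁ making the complex (H_*(T^n), d₁) acyclic satisfies d₁(x_i) = r_i·[L] with at least one r_i ≠ 0, and the torsion of this acyclic complex equals 1 in F^×/±1. -/
/-!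
Since `H (n + 1)` is the line through `1`, `d (x a) = r a • 1`, and the Leibniz rule becomes
`d (x a * y) = r a • y - x a * d y`; so `d` sends the ordered monomial `m T` to
`∑ₖ ± r k • m (T \ {k})`. If all `r k` vanished, `d` would kill `m univ ∈ H 1`, against
acyclicity; so fix `j` with `r j ≠ 0`.

In each degree the monomials split into the `j`-free `m T` and the `m (T ∪ {j})`, and
`d m (T ∪ {j}) = ± r j • m T` modulo monomials containing `j`. So these boundaries and the
`m (T ∪ {j})` form a block triangular basis of determinant `± r j ^ c_i`, where `c_i` counts the
`j`-free `T` in that degree; in particular the boundaries `d m (T ∪ {j})` are bases of the boundary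
spaces. Measured against them, the `i`-th torsion factor is `± r j ^ c_i · δ_i · δ_{i+1}`, with
`δ_i` the change-of-basis determinants on the boundaries. In the alternating product the `δ_i`
telescope (`δ_0 = δ_{n+1} = 1`) and `∑ (-1)^i c_i = ± χ(T^{n-1}) = 0`, so `τ² = 1`.
-/

open Finset

namespace TorusTorsion

section LinearAlgebra

variable {F V W ι α β : Type*} [Field F] [AddCommGroup V] [Module F V]

theorem toMatrix_eq_toMatrix_mul {κ κ' : Type*} [Fintype κ'] (b : Module.Basis ι F V)
    {f : κ → V} {g : κ' → V} (T : Matrix κ' κ F) (h : ∀ k, f k = ∑ k', T k' k • g k') :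
    b.toMatrix f = b.toMatrix g * T := by
  ext i k
  simp [Module.Basis.toMatrix_apply, Matrix.mul_apply, h k, mul_comm]

-- Only meaningful up to sign: the two index types are matched by an arbitrary bijection.
noncomputable def basisChangeDet {M α' : Type*} [AddCommMonoid M] [Module F M] [Fintype α']
    [DecidableEq α'] (p' : Module.Basis α' F M) (p : Module.Basis α F M) : F :=
  (p'.toMatrix (p.reindex (p.indexEquiv p'))).det

theorem basisChangeDet_ne_zero {M α' : Type*} [AddCommMonoid M] [Module F M] [Fintype α']
    [DecidableEq α'] (p' : Module.Basis α' F M) (p : Module.Basis α F M) :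
    basisChangeDet p' p ≠ 0 := by
  have h := congrArg Matrix.det (p'.toMatrix_mul_toMatrix_flip (p.reindex (p.indexEquiv p')))
  rw [Matrix.det_mul, Matrix.det_one] at h
  exact left_ne_zero_of_mul_eq_one h

theorem basisChangeDet_of_isEmpty {M α' : Type*} [AddCommMonoid M] [Module F M] [Fintype α']
    [DecidableEq α'] [IsEmpty α'] (p' : Module.Basis α' F M) (p : Module.Basis α F M) :
    basisChangeDet p' p = 1 :=
  Matrix.det_isEmpty

theorem subsingleton_of_basis_of_isEmpty [IsEmpty ι] (b : Module.Basis ι F V) : Subsingleton V :=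
  ⟨fun _ _ => b.ext_elem isEmptyElim⟩

variable [Fintype ι] [DecidableEq ι] [Fintype α] [DecidableEq α] [Fintype β] [DecidableEq β]

theorem det_submatrix_sq {κ : Type*} [Fintype κ] [DecidableEq κ] (M : Matrix κ κ F)
    (e e' : ι ≃ κ) :
    (M.submatrix e' e).det ^ 2 = M.det ^ 2 := by
  have : M.submatrix e' e = (M.submatrix e e).submatrix (e'.trans e.symm) id := by
    ext; simp
  rw [this, Matrix.det_permute, Matrix.det_submatrix_equiv_self, mul_pow, ← Int.cast_pow,
    ← Units.val_pow_eq_pow_val, Int.units_sq, Units.val_one, Int.cast_one, one_mul]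

-- The lifts matter only modulo `ker D ≤ Z`, which makes the change of family block triangular;
-- squaring discards the sign of the column order.
theorem det_toMatrix_sumElim_sq_eq [AddCommGroup W] [Module F W] (b : Module.Basis ι F V)
    (D : V →ₗ[F] W) {Z : Submodule F V} (hZ : LinearMap.ker D ≤ Z) {B : Submodule F W}
    (p p' : Module.Basis α F Z) (q q' : Module.Basis β F B) {l l' : β → V}
    (hl : ∀ k, D (l k) = q k) (hl' : ∀ k, D (l' k) = q' k) (e e' : ι ≃ α ⊕ β) :
    (b.toMatrix (Sum.elim (fun a => (p a : V)) l ∘ e)).det ^ 2 =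
      ((p'.toMatrix p).det * (q'.toMatrix q).det) ^ 2 *
        (b.toMatrix (Sum.elim (fun a => (p' a : V)) l' ∘ e')).det ^ 2 := by
  set Q := q'.toMatrix q
  have hker : ∀ k, l k - ∑ k', Q k' k • l' k' ∈ Z := fun k => hZ <| by
    simp only [LinearMap.mem_ker, map_sub, map_sum, map_smul, hl, hl']
    have := congrArg Subtype.val (q'.sum_toMatrix_smul_self (v := q) (j := k))
    simp only [Submodule.coe_sum, Submodule.coe_smul] at this
    rw [sub_eq_zero, this]
  set R : Matrix α β F := Matrix.of fun a k => p'.repr ⟨_, hker k⟩ a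
  have hcol : ∀ c : α ⊕ β, Sum.elim (fun a => (p a : V)) l c =
      ∑ c', Matrix.fromBlocks (p'.toMatrix p) R 0 Q c' c •
        Sum.elim (fun a => (p' a : V)) l' c' := by
    rintro (a | k)
    · have := congrArg Subtype.val (p'.sum_toMatrix_smul_self (v := p) (j := a))
      simp only [Submodule.coe_sum, Submodule.coe_smul] at this
      simp [Fintype.sum_sum_type, this]
    · have := congrArg Subtype.val (p'.sum_repr ⟨_, hker k⟩)
      simp only [Submodule.coe_sum, Submodule.coe_smul] at this
      simp [Fintype.sum_sum_type, R, this]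
  rw [toMatrix_eq_toMatrix_mul b ((Matrix.fromBlocks (p'.toMatrix p) R 0 Q).submatrix e' e),
    Matrix.det_mul, mul_pow, det_submatrix_sq, Matrix.det_fromBlocks_zero₂₁, mul_comm]
  intro x
  rw [Function.comp_apply, hcol, ← e'.sum_comp]
  rfl

theorem det_toMatrix_sumElim_eq_prod (b : Module.Basis ι F V) (e : ι ≃ α ⊕ β) {u : α → V}
    {w : β → V} (ε : α → F) (hw : ∀ k, w k = b (e.symm (Sum.inr k)))
    (hu : ∀ a, u a - ε a • b (e.symm (Sum.inl a)) ∈ Submodule.span F (Set.range w)) :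
    (b.toMatrix (Sum.elim u w ∘ e)).det = ∏ a, ε a := by
  have hrepr : ∀ a a', b.repr (u a) (e.symm (Sum.inl a')) = if a' = a then ε a else 0 := by
    intro a a'
    have hspan : Set.range w = b '' Set.range (e.symm ∘ Sum.inr) := by
      rw [← Set.range_comp]; exact congrArg Set.range (funext hw)
    have hsupp := b.mem_span_image.1 (hspan ▸ hu a)
    have h0 : b.repr (u a - ε a • b (e.symm (Sum.inl a))) (e.symm (Sum.inl a')) = 0 :=
      Finsupp.notMem_support_iff.1 fun h => by simpa using hsupp h
    rw [map_sub, map_smul, b.repr_self, Finsupp.sub_apply, Finsupp.smul_apply, sub_eq_zero,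
      Finsupp.single_apply] at h0
    rw [h0]
    by_cases h : a' = a <;> simp [h, Ne.symm]
  rw [← Matrix.det_submatrix_equiv_self e.symm]
  set M := (b.toMatrix (Sum.elim u w ∘ e)).submatrix e.symm e.symm
  have h₁₁ : M.toBlocks₁₁ = Matrix.diagonal ε := by
    ext a' a
    simp only [M, Matrix.toBlocks₁₁, Matrix.of_apply, Matrix.submatrix_apply,
      Module.Basis.toMatrix_apply, Function.comp_apply, Equiv.apply_symm_apply, Sum.elim_inl,
      hrepr, Matrix.diagonal_apply]
    split_ifs with h <;> simp [h]
  have h₁₂ : M.toBlocks₁₂ = 0 := by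
    ext a k
    simp [M, Matrix.toBlocks₁₂, Module.Basis.toMatrix_apply, hw]
  have h₂₂ : M.toBlocks₂₂ = 1 := by
    ext k k'
    simp [M, Matrix.toBlocks₂₂, Module.Basis.toMatrix_apply, hw, Finsupp.single_apply,
      Matrix.one_apply, eq_comm]
  rw [← Matrix.fromBlocks_toBlocks M, h₁₁, h₁₂, h₂₂,
    Matrix.det_fromBlocks_zero₁₂, Matrix.det_diagonal, Matrix.det_one, mul_one]

end LinearAlgebra

section AlternatingProducts

theorem sum_range_neg_one_pow_mul_choose_sub {n : ℕ} (hn : 2 ≤ n) :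
    ∑ i ∈ range (n + 1), (-1 : ℤ) ^ i * ((n - 1).choose (n - i) : ℤ) = 0 := by
  obtain ⟨m, rfl⟩ : ∃ m, n = m + 1 := ⟨n - 1, by omega⟩
  rw [sum_range_succ']
  have hsymm : ∀ k ∈ range (m + 1),
      (-1 : ℤ) ^ (k + 1) * ((m + 1 - 1).choose (m + 1 - (k + 1)) : ℤ) =
        -((-1 : ℤ) ^ k * (m.choose k : ℤ)) := fun k hk => by
    rw [Nat.add_sub_cancel, Nat.add_sub_add_right,
      Nat.choose_symm (by simpa [Nat.lt_succ_iff] using hk)]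
    ring
  rw [sum_congr rfl hsymm, sum_neg_distrib, Int.alternating_sum_range_choose_of_ne (by omega)]
  simp

variable {F : Type*} [Field F]

theorem prod_range_pow_zpow_neg_one_pow {a : F} (ha : a ≠ 0) (c : ℕ → ℕ) (N : ℕ) :
    ∏ i ∈ range N, (a ^ c i) ^ ((-1 : ℤ) ^ i) = a ^ ∑ i ∈ range N, (-1 : ℤ) ^ i * c i := by
  induction N with
  | zero => simp
  | succ N ih =>
    rw [prod_range_succ, sum_range_succ, ih, zpow_add₀ ha, ← zpow_natCast, ← zpow_mul,
      mul_comm ((c N : ℤ))]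

theorem prod_range_mul_succ_zpow_neg_one_pow {p : ℕ → F} (hp : ∀ i, p i ≠ 0) (N : ℕ) :
    ∏ i ∈ range (N + 1), (p i * p (i + 1)) ^ ((-1 : ℤ) ^ i) =
      p 0 * p (N + 1) ^ ((-1 : ℤ) ^ N) := by
  induction N with
  | zero => simp
  | succ N ih =>
    rw [prod_range_succ, ih, pow_succ, mul_neg_one, zpow_neg, zpow_neg, mul_zpow, mul_inv,
      mul_assoc, mul_inv_cancel_left₀ (zpow_ne_zero _ (hp _))]

theorem sq_prod_zpow_neg_one_pow_eq_one {N : ℕ} {a p : ℕ → F} {ρ : F} {c : ℕ → ℕ}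
    (hp : ∀ i, p i ≠ 0) (hp0 : p 0 = 1) (hpN : p (N + 1) = 1) (hρ : ρ ≠ 0)
    (hc : ∑ i ∈ range (N + 1), (-1 : ℤ) ^ i * c i = 0)
    (ha : ∀ i, a i ^ 2 = p i * p (i + 1) * ρ ^ c i) :
    (∏ i ∈ range (N + 1), a i ^ ((-1 : ℤ) ^ i)) ^ 2 = 1 := by
  have hsq : ∀ i, (a i ^ ((-1 : ℤ) ^ i)) ^ 2 =
      (p i * p (i + 1)) ^ ((-1 : ℤ) ^ i) * (ρ ^ c i) ^ ((-1 : ℤ) ^ i) := fun i => by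
    rw [← zpow_natCast, ← zpow_mul, mul_comm, zpow_mul, zpow_natCast, ha, mul_zpow]
  rw [← prod_pow, prod_congr rfl fun i _ => hsq i, prod_mul_distrib,
    prod_range_mul_succ_zpow_neg_one_pow hp, prod_range_pow_zpow_neg_one_pow hρ, hc, hp0, hpN]
  simp

end AlternatingProducts

section SortedProd

variable {ι A : Type*} [LinearOrder ι]

def sortedProd [Monoid A] (x : ι → A) (S : Finset ι) : A :=
  ((S.sort (· ≤ ·)).map x).prod

variable [Monoid A] (x : ι → A)

@[simp]
theorem sortedProd_empty : sortedProd x ∅ = 1 := by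
  simp [sortedProd]

@[simp]
theorem sortedProd_singleton (a : ι) : sortedProd x {a} = x a := by
  simp [sortedProd]

theorem sortedProd_insert_of_lt {a : ι} {S : Finset ι} (h : ∀ b ∈ S, a < b) :
    sortedProd x (insert a S) = x a * sortedProd x S := by
  rw [sortedProd, sortedProd,
    sort_insert (· ≤ ·) (fun b hb => (h b hb).le) fun ha => (h a ha).false, List.map_cons,
    List.prod_cons]

end SortedProd

theorem exists_d_sortedProd_eq_sum {F ι A : Type*} [Field F] [LinearOrder ι] [Ring A]
    [Algebra F A] {x : ι → A} {d : A →ₗ[F] A} {r : ι → F} (hd1 : d 1 = 0)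
    (hd : ∀ a y, d (x a * y) = r a • y - x a * d y) (T : Finset ι) :
    ∃ c : ι → F, (∀ k, c k ^ 2 = r k ^ 2) ∧
      d (sortedProd x T) = ∑ k ∈ T, c k • sortedProd x (T.erase k) := by
  induction T using Finset.induction_on_min with
  | empty => exact ⟨r, fun _ => rfl, by simp [hd1]⟩
  | insert a U haU ih =>
    obtain ⟨c, hc, hdU⟩ := ih
    have ha : a ∉ U := fun h => (haU a h).false
    refine ⟨Function.update (-c) a (r a), fun k => ?_, ?_⟩
    · rw [Function.update_apply]
      split_ifs with h <;> simp [h, hc]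
    have hface : ∀ k ∈ U, sortedProd x ((insert a U).erase k) = x a * sortedProd x (U.erase k) :=
      fun k hk => by
        rw [erase_insert_of_ne (ne_of_mem_of_not_mem hk ha).symm,
          sortedProd_insert_of_lt x fun b hb => haU b (mem_of_mem_erase hb)]
    rw [sortedProd_insert_of_lt x haU, hd, hdU, sum_insert ha, Function.update_self,
      erase_insert ha, mul_sum, sub_eq_add_neg, ← sum_neg_distrib]
    congr 1
    refine sum_congr rfl fun k hk => ?_
    rw [Function.update_of_ne (ne_of_mem_of_not_mem hk ha), hface k hk, mul_smul_comm,
      Pi.neg_apply, neg_smul]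

section Avoiding

variable {α : Type*}

abbrev Avoiding (j : α) (k i : ℕ) : Type _ :=
  {T : Finset α // j ∉ T ∧ T.card + i = k}

theorem isEmpty_avoiding_succ (j : α) (k : ℕ) : IsEmpty (Avoiding j k (k + 1)) :=
  ⟨fun T => by have := T.2.2; omega⟩

variable [DecidableEq α]

def splitByMem (j : α) (k i : ℕ) :
    {S : Finset α // S.card + (i + 1) = k + 1} ≃ Avoiding j k i ⊕ Avoiding j k (i + 1) where
  toFun S :=
    if h : j ∈ S.1 then
      .inr ⟨S.1.erase j, notMem_erase _ _, by
        have := card_erase_add_one h; have := S.2; omega⟩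
    else .inl ⟨S.1, h, by have := S.2; omega⟩
  invFun := Sum.elim (fun T => ⟨T.1, by have := T.2.2; omega⟩)
    (fun T => ⟨insert j T.1, by rw [card_insert_of_notMem T.2.1]; have := T.2.2; omega⟩)
  left_inv S := by
    by_cases h : j ∈ S.1 <;> simp [h, insert_erase]
  right_inv T := by
    rcases T with ⟨T, hT⟩ | ⟨T, hT⟩ <;> simp [hT.1]

@[simp]
theorem coe_splitByMem_symm_inl {j : α} {k i : ℕ} (T : Avoiding j k i) :
    ((splitByMem j k i).symm (.inl T)).1 = T.1 := rfl

theorem card_avoiding [Fintype α] (j : α) {k i : ℕ} (hk : Fintype.card α = k) (hi : i ≤ k) :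
    Fintype.card (Avoiding j k i) = (k - 1).choose (k - i) := by
  have hfilter : univ.filter (fun T : Finset α => j ∉ T ∧ T.card + i = k) =
      (univ.erase j).powersetCard (k - i) := by
    ext T
    simp only [mem_filter, mem_univ, true_and, mem_powersetCard, subset_erase, subset_univ]
    exact and_congr_right fun _ => by omega
  rw [Fintype.card_subtype, hfilter, card_powersetCard, card_erase_of_mem (mem_univ j),
    card_univ, hk]

theorem isEmpty_avoiding_zero [Fintype α] (j : α) {k : ℕ} (hk : Fintype.card α = k) :
    IsEmpty (Avoiding j k 0) := by
  have : 0 < k := hk ▸ Fintype.card_pos_iff.2 ⟨j⟩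
  rw [← Fintype.card_eq_zero_iff, card_avoiding j hk k.zero_le]
  exact Nat.choose_eq_zero_of_lt (by omega)

theorem sum_range_neg_one_pow_mul_card_avoiding {n : ℕ} (hn : 2 ≤ n) (j : Fin n) :
    ∑ i ∈ range (n + 1), (-1 : ℤ) ^ i * Fintype.card (Avoiding j n i) = 0 := by
  rw [← sum_range_neg_one_pow_mul_choose_sub hn]
  refine sum_congr rfl fun i hi => ?_
  rw [card_avoiding j (Fintype.card_fin n) (by simpa [Nat.lt_succ_iff] using hi)]

end Avoiding

section TorusComplex

abbrev MonomialIdx (n i : ℕ) : Type :=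
  {S : Finset (Fin n) // S.card + i = n + 1}

theorem isEmpty_monomialIdx_zero (n : ℕ) : IsEmpty (MonomialIdx n 0) :=
  ⟨fun S => by have := S.1.card_le_univ; have := S.2; simp only [Fintype.card_fin] at *; omega⟩

theorem isEmpty_monomialIdx_of_lt {n i : ℕ} (hi : n + 1 < i) : IsEmpty (MonomialIdx n i) :=
  ⟨fun S => by have := S.2; omega⟩

variable {F A : Type*} [Field F] [Ring A] [Algebra F A] {n : ℕ} {x : Fin n → A}
  {H : ℕ → Submodule F A} {d : A →ₗ[F] A} {D : ∀ i, H i →ₗ[F] H (i + 1)}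
  {hb : ∀ i : ℕ, Module.Basis (MonomialIdx n i) F (H i)} {r : Fin n → F}

theorem range_D_zero_eq_bot (b : Module.Basis (MonomialIdx n 0) F (H 0)) :
    LinearMap.range (D 0) = ⊥ := by
  have := isEmpty_monomialIdx_zero n
  have := subsingleton_of_basis_of_isEmpty b
  rw [LinearMap.range_eq_bot]
  ext v
  rw [Subsingleton.elim v 0, map_zero, LinearMap.zero_apply]

theorem sortedProd_mem (hhb : ∀ i S, (hb i S : A) = sortedProd x S.1) {S : Finset (Fin n)}
    {i : ℕ} (h : S.card + i = n + 1) : sortedProd x S ∈ H i :=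
  hhb i ⟨S, h⟩ ▸ (hb i ⟨S, h⟩).2

theorem generator_mem (hhb : ∀ i S, (hb i S : A) = sortedProd x S.1) (a : Fin n) :
    x a ∈ H n := by
  simpa using sortedProd_mem hhb (S := {a}) (i := n) (by simp [add_comm])

theorem one_mem_H (hhb : ∀ i S, (hb i S : A) = sortedProd x S.1) : (1 : A) ∈ H (n + 1) := by
  simpa using sortedProd_mem hhb (S := ∅) (i := n + 1) (by simp)

theorem exists_eq_smul_one (hhb : ∀ i S, (hb i S : A) = sortedProd x S.1) {y : A}
    (hy : y ∈ H (n + 1)) : ∃ c : F, y = c • 1 := by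
  let S₀ : MonomialIdx n (n + 1) := ⟨∅, by simp⟩
  have : Subsingleton (MonomialIdx n (n + 1)) :=
    ⟨fun S T => Subtype.ext <| by rw [card_eq_zero.1 (by omega : S.1.card = 0),
      card_eq_zero.1 (by omega : T.1.card = 0)]⟩
  have hS₀ : (hb (n + 1) S₀ : A) = 1 := by rw [hhb]; exact sortedProd_empty x
  refine ⟨(hb (n + 1)).repr ⟨y, hy⟩ S₀, ?_⟩
  have := congrArg Subtype.val ((hb (n + 1)).sum_repr ⟨y, hy⟩)
  rw [Fintype.sum_subsingleton _ S₀, Submodule.coe_smul, hS₀] at this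
  exact this.symm

theorem exists_d_generator_eq_smul_one (hhb : ∀ i S, (hb i S : A) = sortedProd x S.1)
    (hDd : ∀ i v, (D i v : A) = d v) : ∃ r : Fin n → F, ∀ a, d (x a) = r a • 1 := by
  choose r hr using fun a => exists_eq_smul_one hhb <|
    hDd n ⟨x a, generator_mem hhb a⟩ ▸ (D n ⟨x a, generator_mem hhb a⟩).2
  exact ⟨r, hr⟩

theorem d_one_eq_zero (hhb : ∀ i S, (hb i S : A) = sortedProd x S.1)
    (hDd : ∀ i v, (D i v : A) = d v) : d 1 = 0 := by
  have := isEmpty_monomialIdx_of_lt (n := n) (i := n + 1 + 1) (by omega)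
  have := subsingleton_of_basis_of_isEmpty (hb (n + 1 + 1))
  rw [← hDd (n + 1) ⟨1, one_mem_H hhb⟩, Subsingleton.elim (D (n + 1) ⟨1, one_mem_H hhb⟩) 0,
    Submodule.coe_zero]

theorem d_generator_mul (hhb : ∀ i S, (hb i S : A) = sortedProd x S.1)
    (hLeib : ∀ jx : ℕ, ∀ xx ∈ H jx, ∀ y : A,
      d (xx * y) = d xx * y + ((-1 : F) ^ (n + 1 - jx)) • (xx * d y))
    (hr : ∀ a, d (x a) = r a • 1) (a : Fin n) (y : A) :
    d (x a * y) = r a • y - x a * d y := by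
  rw [hLeib n _ (generator_mem hhb a), hr, Nat.add_sub_cancel_left, pow_one, neg_one_smul,
    smul_one_mul, ← sub_eq_add_neg]

theorem exists_d_generator_ne_zero (hhb : ∀ i S, (hb i S : A) = sortedProd x S.1)
    (hDd : ∀ i v, (D i v : A) = d v)
    (hLeib : ∀ jx : ℕ, ∀ xx ∈ H jx, ∀ y : A,
      d (xx * y) = d xx * y + ((-1 : F) ^ (n + 1 - jx)) • (xx * d y))
    (hacyc : ∀ i, LinearMap.ker (D (i + 1)) = LinearMap.range (D i)) : ∃ j, d (x j) ≠ 0 := by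
  by_contra! h
  have hd := d_generator_mul hhb hLeib (r := 0) (by simpa using h)
  obtain ⟨c, hc, hdT⟩ := exists_d_sortedProd_eq_sum (d_one_eq_zero hhb hDd) hd univ
  have hc0 : ∀ k, c k = 0 := fun k => pow_eq_zero_iff two_ne_zero |>.1 (by simpa using hc k)
  have huniv : (univ : Finset (Fin n)).card + 1 = n + 1 := by simp
  have hker : hb 1 ⟨univ, huniv⟩ ∈ LinearMap.ker (D 1) :=
    Subtype.ext <| by simp [hDd, hhb, hdT, hc0]
  rw [hacyc 0, range_D_zero_eq_bot (hb 0)] at hker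
  exact (hb 1).ne_zero _ hker

variable (hb) in
noncomputable def insertBasis (j : Fin n) (i : ℕ) (T : Avoiding j n i) : H i :=
  hb i ⟨insert j T.1, by rw [card_insert_of_notMem T.2.1]; have := T.2.2; omega⟩

theorem exists_D_insertBasis_sub_smul_mem_span (hhb : ∀ i S, (hb i S : A) = sortedProd x S.1)
    (hDd : ∀ i v, (D i v : A) = d v) (hd1 : d 1 = 0)
    (hd : ∀ a y, d (x a * y) = r a • y - x a * d y) {j : Fin n} {i : ℕ} (T : Avoiding j n i) :
    ∃ ε : F, ε ^ 2 = r j ^ 2 ∧ D i (insertBasis hb j i T) -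
      ε • hb (i + 1) ((splitByMem j n i).symm (.inl T)) ∈
        Submodule.span F (Set.range (insertBasis hb j (i + 1))) := by
  obtain ⟨c, hc, hdT⟩ := exists_d_sortedProd_eq_sum hd1 hd (insert j T.1)
  refine ⟨c j, hc j, ?_⟩
  rw [← Submodule.apply_mem_span_image_iff_mem_span (H (i + 1)).injective_subtype,
    ← Set.range_comp]
  simp only [Submodule.subtype_apply, Submodule.coe_sub, Submodule.coe_smul, hDd, insertBasis,
    hhb, coe_splitByMem_symm_inl]
  rw [hdT, sum_insert T.2.1, erase_insert T.2.1, add_sub_cancel_left]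
  refine Submodule.sum_mem _ fun k hk => Submodule.smul_mem _ _ (Submodule.subset_span ?_)
  refine ⟨⟨T.1.erase k, fun h => T.2.1 (mem_of_mem_erase h), ?_⟩, ?_⟩
  · have := card_erase_add_one hk; have := T.2.2; omega
  · simp only [Function.comp_apply, Submodule.subtype_apply, insertBasis, hhb]
    rw [erase_insert_of_ne (ne_of_mem_of_not_mem hk T.2.1).symm]

theorem det_toMatrix_D_insertBasis_sq (hhb : ∀ i S, (hb i S : A) = sortedProd x S.1)
    (hDd : ∀ i v, (D i v : A) = d v) (hd1 : d 1 = 0)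
    (hd : ∀ a y, d (x a * y) = r a • y - x a * d y) (j : Fin n) (i : ℕ) :
    ((hb (i + 1)).toMatrix (Sum.elim (fun T => D i (insertBasis hb j i T))
      (insertBasis hb j (i + 1)) ∘ splitByMem j n i)).det ^ 2 =
        (r j ^ 2) ^ Fintype.card (Avoiding j n i) := by
  choose ε hε hmem using exists_D_insertBasis_sub_smul_mem_span hhb hDd hd1 hd (j := j) (i := i)
  rw [det_toMatrix_sumElim_eq_prod (w := insertBasis hb j (i + 1)) _ _ ε (fun _ => rfl) hmem,
    ← prod_pow, prod_congr rfl fun T _ => hε T, prod_const, card_univ]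

theorem isBasis_sumElim_D_insertBasis (hhb : ∀ i S, (hb i S : A) = sortedProd x S.1)
    (hDd : ∀ i v, (D i v : A) = d v) (hd1 : d 1 = 0)
    (hd : ∀ a y, d (x a * y) = r a • y - x a * d y) {j : Fin n} (hj : r j ≠ 0) (i : ℕ) :
    LinearIndependent F
        (Sum.elim (fun T => D i (insertBasis hb j i T)) (insertBasis hb j (i + 1))) ∧
      Submodule.span F (Set.range
        (Sum.elim (fun T => D i (insertBasis hb j i T)) (insertBasis hb j (i + 1)))) = ⊤ := by
  have hunit : IsUnit ((hb (i + 1)).det (Sum.elim (fun T => D i (insertBasis hb j i T))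
      (insertBasis hb j (i + 1)) ∘ splitByMem j n i)) := by
    rw [Module.Basis.det_apply, isUnit_iff_ne_zero, ← pow_ne_zero_iff two_ne_zero,
      det_toMatrix_D_insertBasis_sq hhb hDd hd1 hd j i]
    exact pow_ne_zero _ (pow_ne_zero _ hj)
  obtain ⟨hli, hspan⟩ := (hb (i + 1)).is_basis_iff_det.2 hunit
  exact ⟨(linearIndependent_equiv _).1 hli, by rwa [EquivLike.range_comp] at hspan⟩

theorem range_D_succ_le_span (hhb : ∀ i S, (hb i S : A) = sortedProd x S.1)
    (hDd : ∀ i v, (D i v : A) = d v) (hd1 : d 1 = 0)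
    (hd : ∀ a y, d (x a * y) = r a • y - x a * d y) (hd2 : d ∘ₗ d = 0) {j : Fin n}
    (hj : r j ≠ 0) (i : ℕ) :
    LinearMap.range (D (i + 1)) ≤
      Submodule.span F (Set.range fun T => D (i + 1) (insertBasis hb j (i + 1) T)) := by
  rw [LinearMap.range_eq_map, ← (isBasis_sumElim_D_insertBasis hhb hDd hd1 hd hj i).2,
    Submodule.map_span, Submodule.span_le]
  rintro _ ⟨_, ⟨T | T, rfl⟩, rfl⟩
  · have hDD : D (i + 1) (D i (insertBasis hb j i T)) = 0 :=
      Subtype.ext <| by simpa [hDd] using LinearMap.congr_fun hd2 (insertBasis hb j i T : A)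
    simp [hDD]
  · exact Submodule.subset_span ⟨T, rfl⟩

theorem exists_basis_range_D (hhb : ∀ i S, (hb i S : A) = sortedProd x S.1)
    (hDd : ∀ i v, (D i v : A) = d v) (hd1 : d 1 = 0)
    (hd : ∀ a y, d (x a * y) = r a • y - x a * d y) (hd2 : d ∘ₗ d = 0) {j : Fin n}
    (hj : r j ≠ 0) (i : ℕ) :
    ∃ B : Module.Basis (Avoiding j n i) F (LinearMap.range (D i)),
      ∀ T, (B T : H (i + 1)) = D i (insertBasis hb j i T) := by
  let v : Avoiding j n i → LinearMap.range (D i) :=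
    fun T => ⟨D i (insertBasis hb j i T), LinearMap.mem_range_self _ _⟩
  have hli : LinearIndependent F v := .of_comp (LinearMap.range (D i)).subtype <|
    (isBasis_sumElim_D_insertBasis hhb hDd hd1 hd hj i).1.comp Sum.inl Sum.inl_injective
  have hspan : ⊤ ≤ Submodule.span F (Set.range v) := by
    rintro w -
    rw [← Submodule.apply_mem_span_image_iff_mem_span (LinearMap.range (D i)).injective_subtype,
      ← Set.range_comp]
    cases i with
    | zero =>
      have hw : (w : H 1) = 0 := by simpa [range_D_zero_eq_bot (hb 0)] using w.2
      simp [hw]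
    | succ i => exact range_D_succ_le_span hhb hDd hd1 hd hd2 hj i w.2
  exact ⟨.mk hli hspan, fun T => by rw [Module.Basis.mk_apply]⟩

theorem torsionFactor_sq (hhb : ∀ i S, (hb i S : A) = sortedProd x S.1)
    (hDd : ∀ i v, (D i v : A) = d v) (hd1 : d 1 = 0)
    (hd : ∀ a y, d (x a * y) = r a • y - x a * d y)
    (hacyc : ∀ i, LinearMap.ker (D (i + 1)) = LinearMap.range (D i)) {κ : ℕ → Type*}
    (bb : ∀ i, Module.Basis (κ i) F (LinearMap.range (D i)))
    (s : ∀ i, LinearMap.range (D i) → H i) (hs : ∀ i v, D i (s i v) = v.1)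
    (e : ∀ i : ℕ, MonomialIdx n (i + 1) ≃ (κ i ⊕ κ (i + 1))) {j : Fin n}
    (B : ∀ i, Module.Basis (Avoiding j n i) F (LinearMap.range (D i)))
    (hB : ∀ i T, (B i T : H (i + 1)) = D i (insertBasis hb j i T)) (i : ℕ) :
    ((hb (i + 1)).toMatrix (fun q => Sum.elim (fun a => (bb i a).1)
      (fun a => s (i + 1) (bb (i + 1) a)) (e i q))).det ^ 2 =
        (basisChangeDet (B i) (bb i) * basisChangeDet (B (i + 1)) (bb (i + 1))) ^ 2 *
          (r j ^ 2) ^ Fintype.card (Avoiding j n i) := by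
  let g := fun k => (bb k).indexEquiv (B k)
  have key := det_toMatrix_sumElim_sq_eq (hb (i + 1)) (D (i + 1)) (hacyc i).le
    ((bb i).reindex (g i)) (B i) ((bb (i + 1)).reindex (g (i + 1))) (B (i + 1))
    (l := fun k => s (i + 1) ((bb (i + 1)).reindex (g (i + 1)) k))
    (l' := insertBasis hb j (i + 1)) (fun _ => hs _ _) (fun k => (hB (i + 1) k).symm)
    ((e i).trans (Equiv.sumCongr (g i) (g (i + 1)))) (splitByMem j n i)
  have hlhs : Sum.elim (fun a => ((bb i).reindex (g i) a : H (i + 1)))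
      (fun k => s (i + 1) ((bb (i + 1)).reindex (g (i + 1)) k)) ∘
        ((e i).trans (Equiv.sumCongr (g i) (g (i + 1)))) =
      fun q => Sum.elim (fun a => (bb i a).1) (fun a => s (i + 1) (bb (i + 1) a)) (e i q) := by
    funext q
    rcases h : e i q with a | a <;> simp [h, Module.Basis.reindex_apply]
  have hrhs : (fun T => (B i T : H (i + 1))) = fun T => D i (insertBasis hb j i T) :=
    funext (hB i)
  rw [hlhs, hrhs, det_toMatrix_D_insertBasis_sq hhb hDd hd1 hd j i] at key
  exact key

end TorusComplex

end TorusTorsion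

open TorusTorsion

theorem stmt_18_general (F A : Type*) [Field F] [Ring A] [Algebra F A]
    (n : ℕ) (hn : 2 ≤ n)
    (x : Fin n → A)
    (m : Finset (Fin n) → A)
    (hm : ∀ S : Finset (Fin n), m S = ((S.sort (· ≤ ·)).map x).prod)
    (H : ℕ → Submodule F A)
    (hb : ∀ i : ℕ, Module.Basis {S : Finset (Fin n) // S.card + i = n + 1} F ↥(H i))
    (hhb : ∀ (i : ℕ) (S : {S : Finset (Fin n) // S.card + i = n + 1}), ((hb i S : A)) = m S.1)
    (d : A →ₗ[F] A) (hd2 : d ∘ₗ d = 0)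
    (hLeib : ∀ jx : ℕ, ∀ xx ∈ H jx, ∀ y : A,
      d (xx * y) = d xx * y + ((-1 : F) ^ (n + 1 - jx)) • (xx * d y))
    (D : ∀ i : ℕ, ↥(H i) →ₗ[F] ↥(H (i + 1)))
    (hDd : ∀ (i : ℕ) (v : ↥(H i)), ((D i v : A)) = d (v : A))
    (hacyc : ∀ i, LinearMap.ker (D (i + 1)) = LinearMap.range (D i))
    (κ : ℕ → Type*)
    (bb : ∀ i, Module.Basis (κ i) F ↥(LinearMap.range (D i)))
    (s : ∀ i, ↥(LinearMap.range (D i)) →ₗ[F] ↥(H i))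
    (hs : ∀ (i : ℕ) (v : ↥(LinearMap.range (D i))), D i (s i v) = v.1)
    (e : ∀ i : ℕ, {S : Finset (Fin n) // S.card + (i + 1) = n + 1} ≃ (κ i ⊕ κ (i + 1))) :
    (∀ i, ∃ rr : F, d (x i) = rr • (1 : A)) ∧
    (∃ i, d (x i) ≠ 0) ∧
    (let τ := ∏ i ∈ Finset.range (n + 1),
        ((hb (i + 1)).toMatrix
          (fun q => Sum.elim (fun a => (bb i a).1) (fun a => s (i + 1) (bb (i + 1) a))
            (e i q))).det ^ ((-1 : ℤ) ^ i)
     τ = 1 ∨ τ = -1) := by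
  obtain rfl : m = sortedProd x := funext hm
  obtain ⟨r, hr⟩ := exists_d_generator_eq_smul_one hhb hDd
  have hd1 := d_one_eq_zero hhb hDd
  have hd := d_generator_mul hhb hLeib hr
  obtain ⟨j, hj⟩ := exists_d_generator_ne_zero hhb hDd hLeib hacyc
  refine ⟨fun a => ⟨r a, hr a⟩, ⟨j, hj⟩, ?_⟩
  intro τ
  have hrj : r j ≠ 0 := fun h => hj (by rw [hr, h, zero_smul])
  choose B hB using exists_basis_range_D hhb hDd hd1 hd hd2 hrj
  have := isEmpty_avoiding_zero j (Fintype.card_fin n)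
  have := isEmpty_avoiding_succ j n
  refine sq_eq_one_iff.1 <| sq_prod_zpow_neg_one_pow_eq_one
    (p := fun i => basisChangeDet (B i) (bb i) ^ 2) (ρ := r j ^ 2)
    (fun i => pow_ne_zero _ (basisChangeDet_ne_zero _ _)) (by simp [basisChangeDet_of_isEmpty])
    (by simp [basisChangeDet_of_isEmpty]) (pow_ne_zero 2 hrj)
    (sum_range_neg_one_pow_mul_card_avoiding hn j) fun i => ?_
  rw [torsionFactor_sq hhb hDd hd1 hd hacyc bb (fun i => s i) hs e B hB i]
  ring

/-- For the homology ring of the `n`-torus (`n ≥ 2`), the exterior algebra on degree-(n-1)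
generators `x₁,…,x_n` with monomial basis `m S` (grading shifted so that `H 0 = ⊥` and
`m S` has degree `n + 1 - |S|`), any square-zero degree-1 derivation `d₁` (graded Leibniz
rule) making the complex acyclic satisfies `d₁(xᵢ) = rᵢ·[L]` with at least one `rᵢ ≠ 0`,
and the torsion of this acyclic complex (w.r.t. the monomial bases) equals `1` in `F^×/±1`. -/
theorem stmt_18 (F A : Type*) [Field F] [Ring A] [Algebra F A]
    (n : ℕ) (hn : 2 ≤ n)
    (x : Fin n → A)
    (m : Finset (Fin n) → A)
    (hm : ∀ S : Finset (Fin n), m S = ((S.sort (· ≤ ·)).map x).prod)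
    (H : ℕ → Submodule F A)
    (hH0 : H 0 = ⊥) (hHtop : ∀ j, n + 1 < j → H j = ⊥)
    (hmdeg : ∀ S : Finset (Fin n), m S ∈ H (n + 1 - S.card))
    (hb : ∀ i : ℕ, Module.Basis {S : Finset (Fin n) // S.card + i = n + 1} F ↥(H i))
    (hhb : ∀ (i : ℕ) (S : {S : Finset (Fin n) // S.card + i = n + 1}), ((hb i S : A)) = m S.1)
    (d : A →ₗ[F] A) (hd2 : d ∘ₗ d = 0)
    (hLeib : ∀ jx : ℕ, ∀ xx ∈ H jx, ∀ y : A,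
      d (xx * y) = d xx * y + ((-1 : F) ^ (n + 1 - jx)) • (xx * d y))
    (D : ∀ i : ℕ, ↥(H i) →ₗ[F] ↥(H (i + 1)))
    (hDd : ∀ (i : ℕ) (v : ↥(H i)), ((D i v : A)) = d (v : A))
    (hacyc : ∀ i, LinearMap.ker (D (i + 1)) = LinearMap.range (D i))
    (κ : ℕ → Type*) [∀ i, Fintype (κ i)]
    (bb : ∀ i, Module.Basis (κ i) F ↥(LinearMap.range (D i)))
    (s : ∀ i, ↥(LinearMap.range (D i)) →ₗ[F] ↥(H i))
    (hs : ∀ (i : ℕ) (v : ↥(LinearMap.range (D i))), D i (s i v) = v.1)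
    (e : ∀ i : ℕ, {S : Finset (Fin n) // S.card + (i + 1) = n + 1} ≃ (κ i ⊕ κ (i + 1))) :
    (∀ i, ∃ rr : F, d (x i) = rr • (1 : A)) ∧
    (∃ i, d (x i) ≠ 0) ∧
    (let τ := ∏ i ∈ Finset.range (n + 1),
        ((hb (i + 1)).toMatrix
          (fun q => Sum.elim (fun a => (bb i a).1) (fun a => s (i + 1) (bb (i + 1) a))
            (e i q))).det ^ ((-1 : ℤ) ^ i)
     τ = 1 ∨ τ = -1) :=
  stmt_18_general F A n hn x m hm H hb hhb d hd2 hLeib D hDd hacyc κ bb s hs e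
end
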